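/- Let X be the Kaup–Kupershmidt deformation vector field and J_X its Jacobian matrix, (J_X)^i_j = ∂X^i/∂z^j. Then at every point with y ≠ 0 the matrix −(J_X·P₀ + P₀·J_Xᵀ) (which equals the Lie derivative L_X P₀ since P₀ is constant) equals the skew-symmetric matrix P₁_KK. -/

import Mathlib

open Matrix

/-! Away from `y = 0` each component of `X` is built from the coordinates by sums, products and
a single division by `y`, so the chain rule gives its differential as an explicit row of partial
derivatives. With the Jacobian in closed form, `−(J_X P₀ + P₀ J_Xᵀ) = P₁_KK` is an identity between
rational functions of `z`, checked entrywise after clearing the denominators `y` and `y²`. -/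

/-- Partial derivative `∂f/∂z^l` at `z`, coordinates `z = (p_x, p_y, x, y)`. -/
noncomputable def pd (l : Fin 4) (f : (Fin 4 → ℝ) → ℝ) (z : Fin 4 → ℝ) : ℝ :=
  fderiv ℝ f z (Pi.single l 1)

/-- The canonical Poisson tensor `P₀` in the ordering `(p_x, p_y, x, y)`. -/
def P0 : Matrix (Fin 4) (Fin 4) ℝ :=
  !![0, 0, -1, 0;
     0, 0, 0, -1;
     1, 0, 0, 0;
     0, 1, 0, 0]

/-- The Kaup–Kupershmidt deformation vector field `X`, components ordered `(p_x,p_y,x,y)`. -/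
noncomputable def XKK (a ω : ℝ) (z : Fin 4 → ℝ) : Fin 4 → ℝ :=
  ![-4*a*(z 2)*(z 0) - 6*a*(z 3)*(z 1) + 48*(z 2)*(a*(z 2)+ω)*(z 1)/(z 3),
    0,
    -(1/2)*a*(z 3)^2 - 3*(z 0)*(z 1)/(z 3) - 3*ω*(z 2),
    -6*(z 1)^2/(z 3) + (8*a*(z 2)+3*ω)*(z 3)]

/-- Jacobian matrix `(J_X)^i_j = ∂X^i/∂z^j`. -/
noncomputable def JXKK (a ω : ℝ) (z : Fin 4 → ℝ) : Matrix (Fin 4) (Fin 4) ℝ :=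
  Matrix.of fun i j => pd j (fun w => XKK a ω w i) z

/-- The deformed Poisson tensor `P₁` for the Kaup–Kupershmidt system. -/
noncomputable def P1KK (a ω : ℝ) (z : Fin 4 → ℝ) : Matrix (Fin 4) (Fin 4) ℝ :=
  let px := z 0; let py := z 1; let x := z 2; let y := z 3
  !![0, 6*py*(a*y^2 + 8*x*(a*x+ω))/y^2, -(4*a*x+3*ω), 2*(a*y^2 + 24*x*(a*x+ω))/y;
     -(6*py*(a*y^2 + 8*x*(a*x+ω))/y^2), 0, -(a*y) + 3*px*py/y^2, 8*a*x + 3*ω + 6*py^2/y^2;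
     4*a*x+3*ω, a*y - 3*px*py/y^2, 0, -(3*px)/y;
     -(2*(a*y^2 + 24*x*(a*x+ω))/y), -(8*a*x + 3*ω + 6*py^2/y^2), 3*px/y, 0]

theorem HasFDerivAt.div {𝕜 E : Type*} [NontriviallyNormedField 𝕜] [NormedAddCommGroup E]
    [NormedSpace 𝕜 E] {f g : E → 𝕜} {f' g' : E →L[𝕜] 𝕜} {x : E}
    (hf : HasFDerivAt f f' x) (hg : HasFDerivAt g g' x) (hx : g x ≠ 0) :
    HasFDerivAt (fun w => f w / g w) ((g x)⁻¹ • f' - (f x / g x ^ 2) • g') x := by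
  simp only [div_eq_mul_inv]
  refine (hf.mul ((hasDerivAt_inv hx).comp_hasFDerivAt x hg)).congr_fderiv ?_
  ext v
  simp only [_root_.add_apply, _root_.sub_apply, _root_.smul_apply, smul_eq_mul,
    Function.comp_apply]
  ring

theorem pd_eq_of_hasFDerivAt {f : (Fin 4 → ℝ) → ℝ} {c z : Fin 4 → ℝ}
    (h : HasFDerivAt f (∑ j, c j • ContinuousLinearMap.proj j : (Fin 4 → ℝ) →L[ℝ] ℝ) z)
    (l : Fin 4) :
    pd l f z = c l := by
  simp [pd, h.fderiv, Pi.single_apply]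

noncomputable def jacobianKK (a ω : ℝ) (z : Fin 4 → ℝ) : Matrix (Fin 4) (Fin 4) ℝ :=
  let px := z 0; let py := z 1; let x := z 2; let y := z 3
  !![-4*a*x, -6*a*y + 48*x*(a*x+ω)/y, -4*a*px + (96*a*x+48*ω)*py/y,
      -6*a*py - 48*x*(a*x+ω)*py/y^2;
     0, 0, 0, 0;
     -3*py/y, -3*px/y, -3*ω, -a*y + 3*px*py/y^2;
     0, -12*py/y, 8*a*y, 8*a*x + 3*ω + 6*py^2/y^2]

theorem hasFDerivAt_XKK (a ω : ℝ) {z : Fin 4 → ℝ} (hy : z 3 ≠ 0) (i : Fin 4) :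
    HasFDerivAt (fun w => XKK a ω w i)
      (∑ j, jacobianKK a ω z i j • ContinuousLinearMap.proj j : (Fin 4 → ℝ) →L[ℝ] ℝ) z := by
  have dpx := hasFDerivAt_apply (𝕜 := ℝ) 0 z
  have dpy := hasFDerivAt_apply (𝕜 := ℝ) 1 z
  have dx := hasFDerivAt_apply (𝕜 := ℝ) 2 z
  have dy := hasFDerivAt_apply (𝕜 := ℝ) 3 z
  fin_cases i <;> [
    refine ((((dx.const_mul (-4*a)).mul dpx).sub ((dy.const_mul (6*a)).mul dpy)).add
      ((((dx.const_mul 48).mul ((dx.const_mul a).add_const ω)).mul dpy).div dy hy)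
      ).congr_fderiv ?_;
    refine (hasFDerivAt_const 0 z).congr_fderiv ?_;
    refine ((((dy.pow 2).const_mul (-(1/2)*a)).sub (((dpx.const_mul 3).mul dpy).div dy hy)).sub
      (dx.const_mul (3*ω))).congr_fderiv ?_;
    refine ((((dpy.pow 2).const_mul (-6)).div dy hy).add
      (((dx.const_mul (8*a)).add_const (3*ω)).mul dy)).congr_fderiv ?_] <;>
  ext v <;>
  simp only [jacobianKK, Fin.sum_univ_four, of_apply, cons_val', cons_val, cons_val_zero,
    cons_val_one, cons_val_fin_one, _root_.add_apply, _root_.sub_apply, _root_.smul_apply,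
    _root_.zero_apply, ContinuousLinearMap.proj_apply, smul_eq_mul, nsmul_eq_mul, Pi.mul_apply,
    Fin.zero_eta, Fin.mk_one, Fin.reduceFinMk, Fin.isValue] <;>
  field_simp <;>
  ring

theorem JXKK_eq_jacobianKK (a ω : ℝ) {z : Fin 4 → ℝ} (hy : z 3 ≠ 0) :
    JXKK a ω z = jacobianKK a ω z := by
  ext i j
  exact pd_eq_of_hasFDerivAt (hasFDerivAt_XKK a ω hy i) j

theorem lie_deriv_P0_eq_P1KK (a ω : ℝ) (z : Fin 4 → ℝ) (hy : z 3 ≠ 0) :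
    -(JXKK a ω z * P0 + P0 * (JXKK a ω z)ᵀ) = P1KK a ω z := by
  rw [JXKK_eq_jacobianKK a ω hy]
  ext i j
  simp only [Matrix.neg_apply, Matrix.add_apply, mul_apply, transpose_apply, Fin.sum_univ_four]
  fin_cases i <;> fin_cases j <;>
    simp only [P0, P1KK, jacobianKK, of_apply, cons_val', cons_val, cons_val_zero, cons_val_one,
      cons_val_fin_one, Fin.zero_eta, Fin.mk_one, Fin.reduceFinMk, Fin.isValue] <;>
    field_simp <;> ring
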